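/- arXiv:2212.14814 — 6 statements merged into one kernel-verified Lean document; each statement's English description precedes it below -/
import Mathlib

section
/- Let G be a simple graph and X a module of G (every vertex of X has the same neighborhood outside X). Then any induced path on four vertices P in G is either entirely contained in X, entirely contained in V \ X, or has exactly one vertex in X. -/
/-- `X` is a module of `G`: every vertex outside `X` is adjacent to all of `X` or none of `X`. -/
def IsModule {V : Type*} (G : SimpleGraph V) (X : Set V) : Prop :=
  ∀ x ∈ X, ∀ y ∈ X, ∀ v, v ∉ X → (G.Adj v x ↔ G.Adj v y)

/-- `a,b,c,d` form an induced path on four vertices in `G`. -/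
def IsInducedP4 {V : Type*} (G : SimpleGraph V) (a b c d : V) : Prop :=
  a ≠ b ∧ a ≠ c ∧ a ≠ d ∧ b ≠ c ∧ b ≠ d ∧ c ≠ d ∧
  G.Adj a b ∧ G.Adj b c ∧ G.Adj c d ∧ ¬ G.Adj a c ∧ ¬ G.Adj a d ∧ ¬ G.Adj b d

/-- A cograph is a graph with no induced `P₄`. -/
def IsCograph {V : Type*} (G : SimpleGraph V) : Prop :=
  ∀ a b c d, ¬ IsInducedP4 G a b c d

/-- The edit of `G` by a set `S` of (unordered) pairs: the adjacency is flipped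
exactly on the pairs of `S`. -/
def editGraph {V : Type*} (G : SimpleGraph V) (S : Set (Sym2 V)) : SimpleGraph V where
  Adj x y := x ≠ y ∧ ((G.Adj x y ∧ s(x,y) ∉ S) ∨ (¬ G.Adj x y ∧ s(x,y) ∈ S))
  symm := by
    constructor
    intro x y h
    refine ⟨h.1.symm, ?_⟩
    rw [Sym2.eq_swap]
    rcases h.2 with ⟨ha, hs⟩ | ⟨ha, hs⟩
    · exact Or.inl ⟨ha.symm, hs⟩
    · exact Or.inr ⟨fun hadj => ha hadj.symm, hs⟩
  loopless := ⟨fun x h => h.1 rfl⟩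

/-- `δ(X)`: the set of pairs with exactly one endpoint in `X`. -/
def cutPairs {V : Type*} (X : Set V) : Set (Sym2 V) :=
  {e | ∃ x y, e = s(x,y) ∧ x ∈ X ∧ y ∉ X}

/-- `X` is a `t`-module of `G`: editing at most `t` pairs of its cut makes it a module. -/
def IsTModule {V : Type*} (G : SimpleGraph V) (t : ℕ) (X : Set V) : Prop :=
  ∃ T ⊆ cutPairs X, T.ncard ≤ t ∧ IsModule (editGraph G T) X

/-- `M` is (the vertex set of) a connected component of `G`. -/
def IsCC {V : Type*} (G : SimpleGraph V) (M : Set V) : Prop :=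
  ∃ x, M = {y | G.Reachable x y}

/-- A comodule: a module which is a connected component of `G` or of its complement. -/
def IsComodule {V : Type*} (G : SimpleGraph V) (M : Set V) : Prop :=
  IsModule G M ∧ (IsCC G M ∨ IsCC Gᶜ M)

/-- A strong module: a module comparable with every module it meets. -/
def IsStrongModule {V : Type*} (G : SimpleGraph V) (M : Set V) : Prop :=
  IsModule G M ∧ ∀ M', IsModule G M' → (M ∩ M').Nonempty → M ⊆ M' ∨ M' ⊆ M

/-! A vertex that sees exactly one of two vertices of a module lies in the module. In an induced
`P₄` every pair of vertices is separated by some third vertex of the path, and chasing these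
separators shows that a module containing two vertices of the path contains all four. -/

section

variable {V : Type*} {G : SimpleGraph V} {X : Set V}

theorem IsModule.mem_of_adj_of_not_adj (hX : IsModule G X) {x y v : V} (hx : x ∈ X) (hy : y ∈ X)
    (hvx : G.Adj v x) (hvy : ¬ G.Adj v y) : v ∈ X :=
  by_contra fun hv => hvy ((hX x hx y hy v hv).mp hvx)

namespace IsInducedP4

variable {a b c d : V}

theorem subset_of_inner_mem (hX : IsModule G X) (h : IsInducedP4 G a b c d) (hb : b ∈ X)
    (hc : c ∈ X) : ({a, b, c, d} : Set V) ⊆ X := by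
  obtain ⟨-, -, -, -, -, -, hab, -, hcd, hac, -, hbd⟩ := h
  have ha : a ∈ X := hX.mem_of_adj_of_not_adj hb hc hab hac
  have hd : d ∈ X := hX.mem_of_adj_of_not_adj hc hb hcd.symm (fun h => hbd h.symm)
  simp [Set.insert_subset_iff, ha, hb, hc, hd]

theorem inner_mem_of_mem_of_mem (hX : IsModule G X) (h : IsInducedP4 G a b c d) {x y : V}
    (hxy : x ≠ y) (hx : x ∈ ({a, b, c, d} : Set V)) (hy : y ∈ ({a, b, c, d} : Set V))
    (hxX : x ∈ X) (hyX : y ∈ X) : b ∈ X ∧ c ∈ X := by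
  obtain ⟨-, -, -, -, -, -, hab, hbc, hcd, hac, had, hbd⟩ := h
  have hab_c : a ∈ X → b ∈ X → c ∈ X := fun ha hb =>
    hX.mem_of_adj_of_not_adj hb ha hbc.symm (fun h => hac h.symm)
  have hac_d : a ∈ X → c ∈ X → d ∈ X := fun ha hc =>
    hX.mem_of_adj_of_not_adj hc ha hcd.symm (fun h => had h.symm)
  have hcd_b : c ∈ X → d ∈ X → b ∈ X := fun hc hd => hX.mem_of_adj_of_not_adj hc hd hbc hbd
  have had_b : a ∈ X → d ∈ X → b ∈ X := fun ha hd =>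
    hX.mem_of_adj_of_not_adj ha hd hab.symm hbd
  have had_c : a ∈ X → d ∈ X → c ∈ X := fun ha hd =>
    hX.mem_of_adj_of_not_adj hd ha hcd (fun h => hac h.symm)
  have hbd_a : b ∈ X → d ∈ X → a ∈ X := fun hb hd => hX.mem_of_adj_of_not_adj hb hd hab had
  simp only [Set.mem_insert_iff, Set.mem_singleton_iff] at hx hy
  rcases hx with rfl | rfl | rfl | rfl <;> rcases hy with rfl | rfl | rfl | rfl <;> simp_all

end IsInducedP4

end

/-- an induced `P₄` is contained in a module `X`, avoids `X`,
or meets `X` in exactly one vertex. -/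
theorem p4_module {V : Type*} (G : SimpleGraph V) (X : Set V) (hX : IsModule G X)
    (a b c d : V) (h : IsInducedP4 G a b c d) :
    ({a, b, c, d} : Set V) ⊆ X ∨ ({a, b, c, d} : Set V) ∩ X = ∅ ∨
      ∃ v, ({a, b, c, d} : Set V) ∩ X = {v} := by
  by_cases htrace : (({a, b, c, d} : Set V) ∩ X).Subsingleton
  · rcases htrace.eq_empty_or_singleton with hempty | hsingle
    · exact Or.inr (Or.inl hempty)
    · exact Or.inr (Or.inr hsingle)
  · obtain ⟨x, ⟨hx, hxX⟩, y, ⟨hy, hyX⟩, hxy⟩ := Set.not_subsingleton_iff.mp htrace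
    obtain ⟨hb, hc⟩ := h.inner_mem_of_mem_of_mem hX hxy hx hy hxX hyX
    exact Or.inl (h.subset_of_inner_mem hX hb hc)
end

section
/- Let G be a graph, X a module of G, H a cograph obtained from G by editing a minimum-size set S of vertex pairs, and x ∈ X a vertex incident to the fewest pairs of S ∩ δ(X). Then the graph G' obtained by editing G with S' := (S \ δ(X)) ∪ {pairs making every vertex of X have the same outside-neighborhood as x} is a cograph with |S'| ≤ |S|, and X is a module of G'. -/
/-!
Write `H = G △ S` and `G' = G △ S'`. Away from `δ(X)` the two graphs agree, and on `δ(X)` every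
`y ∈ X` gets the outside neighbourhood that `x` has in `H`; so `X` is a module of `G'`, and `G'`
arises from the cograph `H` by substituting `H[X]` for the vertex `x`. A module of a graph meets an
induced `P₄` in at most one vertex or contains it, because `P₄` has no nontrivial module. A `P₄`
of `G'` inside `X` is then a `P₄` of `H`, and one meeting `X` in at most one vertex becomes a `P₄`
of `H` once that vertex is moved onto `x`.

For the count, `X` being a module of `G` makes the new pairs of `δ(X)` exactly the pairs `yv`
with `y ∈ X` and `xv ∈ S ∩ δ(X)`. There are `|X| · d(x)` of them, where `d(y)` counts the pairs of
`S ∩ δ(X)` at `y`, and by the choice of `x` this is at most `∑_{y ∈ X} d(y) = |S ∩ δ(X)|`.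
-/

section

variable {V : Type*}

lemma IsModule.adj_iff {G : SimpleGraph V} {X : Set V} (hX : IsModule G X) {y z v : V}
    (hy : y ∈ X) (hz : z ∈ X) (hv : v ∉ X) : G.Adj y v ↔ G.Adj z v := by
  rw [G.adj_comm y, G.adj_comm z]
  exact hX y hy z hz v hv

/-- `f` need not be injective: no two vertices of a `P₄` have the same neighbourhood. -/
lemma IsInducedP4.map {W : Type*} {G : SimpleGraph V} {H : SimpleGraph W} {a b c d : V}
    (h : IsInducedP4 G a b c d) (f : V → W)
    (hf : ∀ u ∈ ({a, b, c, d} : Set V), ∀ w ∈ ({a, b, c, d} : Set V),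
      H.Adj (f u) (f w) ↔ G.Adj u w) :
    IsInducedP4 H (f a) (f b) (f c) (f d) := by
  obtain ⟨-, -, -, -, -, -, hab, hbc, hcd, hac, had, hbd⟩ := h
  simp only [Set.mem_insert_iff, Set.mem_singleton_iff, forall_eq_or_imp, forall_eq] at hf
  unfold IsInducedP4
  grind [SimpleGraph.Adj.ne, SimpleGraph.adj_comm]

lemma IsInducedP4.subset_or_subsingleton_of_isModule {G : SimpleGraph V} {X : Set V}
    {a b c d : V} (hX : IsModule G X) (h : IsInducedP4 G a b c d) :
    {a, b, c, d} ⊆ X ∨ ({a, b, c, d} ∩ X).Subsingleton := by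
  obtain ⟨-, -, -, -, -, -, hab, hbc, hcd, hac, had, hbd⟩ := h
  -- In each mixed pattern some vertex outside `X` tells apart two path vertices inside `X`.
  by_cases ha : a ∈ X <;> by_cases hb : b ∈ X <;> by_cases hc : c ∈ X <;> by_cases hd : d ∈ X
  all_goals first
    | left; grind
    | right; grind [Set.Subsingleton]
    | exfalso; grind [IsModule.adj_iff, SimpleGraph.adj_comm]

lemma IsCograph.of_isModule {G H : SimpleGraph V} {X : Set V} {x : V} (hH : IsCograph H)
    (hX : IsModule G X) (hx : x ∈ X)
    (hin : ∀ u ∈ X, ∀ w ∈ X, G.Adj u w ↔ H.Adj u w)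
    (hout : ∀ u ∉ X, ∀ w ∉ X, G.Adj u w ↔ H.Adj u w)
    (hcut : ∀ v ∉ X, G.Adj x v ↔ H.Adj x v) : IsCograph G := by
  classical
  intro a b c d hP
  rcases hP.subset_or_subsingleton_of_isModule hX with hsub | hsub
  · exact hH _ _ _ _ (hP.map id fun u hu w hw => (hin u (hsub hu) w (hsub hw)).symm)
  · have hcut' : ∀ u ∈ X, ∀ v ∉ X, G.Adj u v ↔ H.Adj x v := fun u hu v hv =>
      (hX.adj_iff hu hx hv).trans (hcut v hv)
    refine hH _ _ _ _ (hP.map (fun v => if v ∈ X then x else v) fun u hu w hw => ?_)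
    by_cases huX : u ∈ X <;> by_cases hwX : w ∈ X <;> simp only [huX, hwX, if_true, if_false]
    · obtain rfl := hsub ⟨hu, huX⟩ ⟨hw, hwX⟩
      simp
    · exact (hcut' u huX w hwX).symm
    · rw [G.adj_comm, H.adj_comm]
      exact (hcut' w hwX u huX).symm
    · exact (hout u huX w hwX).symm

lemma mk_mem_cutPairs_iff {X : Set V} {u w : V} :
    s(u, w) ∈ cutPairs X ↔ ¬ (u ∈ X ↔ w ∈ X) := by
  constructor
  · rintro ⟨a, b, he, ha, hb⟩
    rcases Sym2.eq_iff.mp he with ⟨rfl, rfl⟩ | ⟨rfl, rfl⟩ <;> tauto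
  · intro h
    by_cases hu : u ∈ X
    · exact ⟨u, w, rfl, hu, fun hw => h (iff_of_true hu hw)⟩
    · exact ⟨w, u, Sym2.eq_swap, by tauto, hu⟩

lemma editGraph_adj_congr (G : SimpleGraph V) {S T : Set (Sym2 V)} {u w : V}
    (h : s(u, w) ∈ S ↔ s(u, w) ∈ T) : (editGraph G S).Adj u w ↔ (editGraph G T).Adj u w := by
  simp only [editGraph, h]

lemma editGraph_adj_of_ne (G : SimpleGraph V) (S : Set (Sym2 V)) {u w : V} (h : u ≠ w) :
    (editGraph G S).Adj u w ↔ (G.Adj u w ↔ s(u, w) ∉ S) := by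
  simp only [editGraph, ne_eq, h, not_false_eq_true, true_and]
  tauto

def cutAlignEdits (G H : SimpleGraph V) (X : Set V) (x : V) : Set (Sym2 V) :=
  {e | ∃ y v, e = s(y, v) ∧ y ∈ X ∧ v ∉ X ∧ ¬ (G.Adj y v ↔ H.Adj x v)}

def moduleRepair (G : SimpleGraph V) (S : Set (Sym2 V)) (X : Set V) (x : V) : Set (Sym2 V) :=
  (S \ cutPairs X) ∪ cutAlignEdits G (editGraph G S) X x

lemma cutAlignEdits_subset_cutPairs {G H : SimpleGraph V} {X : Set V} {x : V} :
    cutAlignEdits G H X x ⊆ cutPairs X := by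
  rintro e ⟨y, v, rfl, hy, hv, -⟩
  exact ⟨y, v, rfl, hy, hv⟩

lemma mk_mem_cutAlignEdits_iff {G H : SimpleGraph V} {X : Set V} {x y v : V}
    (hy : y ∈ X) (hv : v ∉ X) :
    s(y, v) ∈ cutAlignEdits G H X x ↔ ¬ (G.Adj y v ↔ H.Adj x v) := by
  constructor
  · rintro ⟨y', v', he, hy', hv', hne⟩
    rcases Sym2.eq_iff.mp he with ⟨rfl, rfl⟩ | ⟨rfl, rfl⟩
    · exact hne
    · exact absurd hy' hv
  · exact fun h => ⟨y, v, rfl, hy, hv, h⟩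

section moduleRepair

variable {G : SimpleGraph V} {S : Set (Sym2 V)} {X : Set V} {x : V}

lemma moduleRepair_adj_of_mk_notMem_cutPairs {u w : V} (h : s(u, w) ∉ cutPairs X) :
    (editGraph G (moduleRepair G S X x)).Adj u w ↔ (editGraph G S).Adj u w := by
  refine editGraph_adj_congr G ⟨?_, fun hS => Or.inl ⟨hS, h⟩⟩
  rintro (hS | hA)
  · exact hS.1
  · exact absurd (cutAlignEdits_subset_cutPairs hA) h

lemma moduleRepair_adj_of_mem_of_notMem {y v : V} (hy : y ∈ X) (hv : v ∉ X) :
    (editGraph G (moduleRepair G S X x)).Adj y v ↔ (editGraph G S).Adj x v := by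
  have hmem : s(y, v) ∈ moduleRepair G S X x ↔ ¬ (G.Adj y v ↔ (editGraph G S).Adj x v) := by
    rw [moduleRepair, Set.mem_union, mk_mem_cutAlignEdits_iff hy hv, Set.mem_sdiff,
      mk_mem_cutPairs_iff]
    tauto
  rw [editGraph_adj_of_ne G _ (ne_of_mem_of_not_mem hy hv), hmem]
  tauto

lemma isModule_moduleRepair : IsModule (editGraph G (moduleRepair G S X x)) X :=
  fun y hy z hz v hv => by
    rw [SimpleGraph.adj_comm _ v y, SimpleGraph.adj_comm _ v z,
      moduleRepair_adj_of_mem_of_notMem hy hv, moduleRepair_adj_of_mem_of_notMem hz hv]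

lemma isCograph_moduleRepair (hcog : IsCograph (editGraph G S)) (hx : x ∈ X) :
    IsCograph (editGraph G (moduleRepair G S X x)) :=
  hcog.of_isModule isModule_moduleRepair hx
    (fun u hu w hw => moduleRepair_adj_of_mk_notMem_cutPairs <| by
      simp [mk_mem_cutPairs_iff, hu, hw])
    (fun u hu w hw => moduleRepair_adj_of_mk_notMem_cutPairs <| by
      simp [mk_mem_cutPairs_iff, hu, hw])
    (fun v hv => moduleRepair_adj_of_mem_of_notMem hx hv)

lemma incident_cutPairs_eq_image (T : Set (Sym2 V)) (hx : x ∈ X) :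
    {e ∈ T ∩ cutPairs X | x ∈ e} = (fun v => s(x, v)) '' {v | v ∉ X ∧ s(x, v) ∈ T} := by
  ext e
  constructor
  · rintro ⟨⟨heT, a, b, rfl, ha, hb⟩, hxe⟩
    rcases Sym2.mem_iff.mp hxe with rfl | rfl
    · exact ⟨b, ⟨hb, heT⟩, rfl⟩
    · exact absurd hx hb
  · rintro ⟨v, ⟨hv, hvT⟩, rfl⟩
    exact ⟨⟨hvT, x, v, rfl, hx, hv⟩, Sym2.mem_mk_left x v⟩

lemma cutAlignEdits_editGraph_eq_image (hX : IsModule G X) (hx : x ∈ X) :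
    cutAlignEdits G (editGraph G S) X x =
      (fun p : V × V => s(p.1, p.2)) '' (X ×ˢ {v | v ∉ X ∧ s(x, v) ∈ S}) := by
  have hkey : ∀ y ∈ X, ∀ v ∉ X, ¬ (G.Adj y v ↔ (editGraph G S).Adj x v) ↔ s(x, v) ∈ S :=
    fun y hy v hv => by
      rw [hX.adj_iff hy hx hv, editGraph_adj_of_ne G S (ne_of_mem_of_not_mem hx hv)]
      tauto
  ext e
  constructor
  · rintro ⟨y, v, rfl, hy, hv, hne⟩
    exact ⟨(y, v), ⟨hy, hv, (hkey y hy v hv).mp hne⟩, rfl⟩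
  · rintro ⟨⟨y, v⟩, ⟨hy, hv, hS⟩, rfl⟩
    exact ⟨y, v, rfl, hy, hv, (hkey y hy v hv).mpr hS⟩

lemma ncard_cutAlignEdits_editGraph (hX : IsModule G X) (hx : x ∈ X) :
    (cutAlignEdits G (editGraph G S) X x).ncard =
      X.ncard * {e ∈ S ∩ cutPairs X | x ∈ e}.ncard := by
  have hinj : Set.InjOn (fun p : V × V => s(p.1, p.2)) (X ×ˢ {v | v ∉ X ∧ s(x, v) ∈ S}) := by
    rintro ⟨y, v⟩ ⟨-, hv, -⟩ ⟨y', v'⟩ ⟨hy', -, -⟩ h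
    rcases Sym2.eq_iff.mp h with ⟨rfl, rfl⟩ | ⟨rfl, rfl⟩
    · rfl
    · exact absurd hy' hv
  rw [cutAlignEdits_editGraph_eq_image hX hx, hinj.ncard_image, Set.ncard_prod,
    incident_cutPairs_eq_image S hx,
    Set.ncard_image_of_injective _ fun v w h => Sym2.congr_right.mp h]

lemma ncard_mul_le_ncard_of_subset_cutPairs [Finite V] {T : Set (Sym2 V)}
    (hT : T ⊆ cutPairs X) {k : ℕ} (hk : ∀ y ∈ X, k ≤ {e ∈ T | y ∈ e}.ncard) :
    X.ncard * k ≤ T.ncard := by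
  classical
  have := Fintype.ofFinite V
  have hdisj : (X.toFinset : Set V).PairwiseDisjoint fun y => {e ∈ T | y ∈ e}.toFinset := by
    intro y hy z hz hyz
    simp only [Function.onFun, Finset.disjoint_left, Set.mem_toFinset, Set.mem_sep_iff]
    rintro e ⟨heT, hye⟩ ⟨-, hze⟩
    obtain ⟨a, b, rfl, ha, hb⟩ := hT heT
    rw [Set.coe_toFinset] at hy hz
    rcases Sym2.mem_iff.mp hye with rfl | rfl <;> rcases Sym2.mem_iff.mp hze with rfl | rfl
    all_goals tauto
  calc X.ncard * k = X.toFinset.card • k := by rw [Set.ncard_eq_toFinset_card', smul_eq_mul]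
    _ ≤ ∑ y ∈ X.toFinset, {e ∈ T | y ∈ e}.toFinset.card :=
      Finset.card_nsmul_le_sum _ _ _ fun y hy => by
        rw [← Set.ncard_eq_toFinset_card']
        exact hk y (Set.mem_toFinset.mp hy)
    _ = (X.toFinset.biUnion fun y => {e ∈ T | y ∈ e}.toFinset).card :=
      (Finset.card_biUnion hdisj).symm
    _ ≤ T.toFinset.card := Finset.card_le_card fun e he => by
      simp only [Finset.mem_biUnion, Set.mem_toFinset, Set.mem_sep_iff] at he ⊢
      obtain ⟨-, -, heT, -⟩ := he
      exact heT
    _ = T.ncard := (Set.ncard_eq_toFinset_card' T).symm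

lemma ncard_moduleRepair_le [Finite V] (hX : IsModule G X) (hx : x ∈ X)
    (hleast : ∀ y ∈ X,
      {e ∈ S ∩ cutPairs X | x ∈ e}.ncard ≤ {e ∈ S ∩ cutPairs X | y ∈ e}.ncard) :
    (moduleRepair G S X x).ncard ≤ S.ncard :=
  calc (moduleRepair G S X x).ncard
      ≤ (S \ cutPairs X).ncard + (cutAlignEdits G (editGraph G S) X x).ncard :=
        Set.ncard_union_le _ _
    _ ≤ (S \ cutPairs X).ncard + (S ∩ cutPairs X).ncard := by
        rw [ncard_cutAlignEdits_editGraph hX hx]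
        gcongr
        exact ncard_mul_le_ncard_of_subset_cutPairs Set.inter_subset_right hleast
    _ = S.ncard := by rw [add_comm, Set.ncard_inter_add_ncard_sdiff_eq_ncard]

end moduleRepair

end

theorem module_preserving_min_edit_general {V : Type*} [Fintype V] (G : SimpleGraph V)
    (X : Set V) (hX : IsModule G X) (S : Set (Sym2 V))
    (hcog : IsCograph (editGraph G S))
    (x : V) (hx : x ∈ X)
    (hleast : ∀ y ∈ X,
      ({e ∈ S ∩ cutPairs X | x ∈ e}).ncard ≤ ({e ∈ S ∩ cutPairs X | y ∈ e}).ncard) :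
    IsCograph (editGraph G ((S \ cutPairs X) ∪
      {e | ∃ y v, e = s(y,v) ∧ y ∈ X ∧ v ∉ X ∧ ¬ (G.Adj y v ↔ (editGraph G S).Adj x v)})) ∧
    ((S \ cutPairs X) ∪
      {e | ∃ y v, e = s(y,v) ∧ y ∈ X ∧ v ∉ X ∧
        ¬ (G.Adj y v ↔ (editGraph G S).Adj x v)}).ncard ≤ S.ncard ∧
    IsModule (editGraph G ((S \ cutPairs X) ∪
      {e | ∃ y v, e = s(y,v) ∧ y ∈ X ∧ v ∉ X ∧ ¬ (G.Adj y v ↔ (editGraph G S).Adj x v)})) X :=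
  ⟨isCograph_moduleRepair hcog hx, ncard_moduleRepair_le hX hx hleast, isModule_moduleRepair⟩

/-- given a module `X` of `G`, a minimum cograph edit `S` of `G`, and a
vertex `x ∈ X` incident to the fewest pairs of `S ∩ δ(X)`, replacing the pairs of
`S ∩ δ(X)` by the pairs making every vertex of `X` have the same outside-neighborhood
as `x` (in the edited graph) yields a set `S'` with `|S'| ≤ |S|` whose edit is again a
cograph, in which `X` is a module. -/
theorem module_preserving_min_edit {V : Type*} [Fintype V] (G : SimpleGraph V)
    (X : Set V) (hX : IsModule G X) (S : Set (Sym2 V))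
    (hcog : IsCograph (editGraph G S))
    (hmin : ∀ S', IsCograph (editGraph G S') → S.ncard ≤ S'.ncard)
    (x : V) (hx : x ∈ X)
    (hleast : ∀ y ∈ X,
      ({e ∈ S ∩ cutPairs X | x ∈ e}).ncard ≤ ({e ∈ S ∩ cutPairs X | y ∈ e}).ncard) :
    IsCograph (editGraph G ((S \ cutPairs X) ∪
      {e | ∃ y v, e = s(y,v) ∧ y ∈ X ∧ v ∉ X ∧ ¬ (G.Adj y v ↔ (editGraph G S).Adj x v)})) ∧
    ((S \ cutPairs X) ∪
      {e | ∃ y v, e = s(y,v) ∧ y ∈ X ∧ v ∉ X ∧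
        ¬ (G.Adj y v ↔ (editGraph G S).Adj x v)}).ncard ≤ S.ncard ∧
    IsModule (editGraph G ((S \ cutPairs X) ∪
      {e | ∃ y v, e = s(y,v) ∧ y ∈ X ∧ v ∉ X ∧ ¬ (G.Adj y v ↔ (editGraph G S).Adj x v)})) X :=
  module_preserving_min_edit_general G X hX S hcog x hx hleast
end

section
/- Let T be a rooted tree that is a path and let P₁,…,P_k be descending subpaths of T whose edge sets cover all edges of T. If T has at least 4ck edges (for some constant c ≥ 1), then there exists an index i and a subpath Q of P_i with at least one edge such that Q shares at least one edge with at most |E(Q)|/c of the paths P₁,…,P_k. -/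
/-- `a` is the parent of `b` in the rooted forest given by the parent map `par`. -/
def parentRel {V : Type*} (par : V → Option V) (a b : V) : Prop := par b = some a

/-- `a` is an ancestor of `b` (reflexively). -/
def Anc {V : Type*} (par : V → Option V) (a b : V) : Prop :=
  Relation.ReflTransGen (parentRel par) a b

/-- The parent map has no cycles, so it defines a rooted forest. -/
def ParAcyclic {V : Type*} (par : V → Option V) : Prop :=
  ∀ v, ¬ Relation.TransGen (parentRel par) v v

/-- The edges of the forest, each edge being identified with its lower (child) endpoint. -/
def forestEdges {V : Type*} (par : V → Option V) : Set V := {v | par v ≠ none}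

/-- A descending path, recorded as a pair (top endpoint, bottom endpoint). -/
def IsDescPath {V : Type*} (par : V → Option V) (P : V × V) : Prop := Anc par P.1 P.2

/-- The edge set of a descending path `P = (top, bot)`: the edges (identified with their
child endpoints) lying strictly below `top` and weakly above `bot`. -/
def dpEdges {V : Type*} (par : V → Option V) (P : V × V) : Set V :=
  {v | Anc par P.1 v ∧ v ≠ P.1 ∧ Anc par v P.2}

/-- `Q` is a (descending) subpath of the descending path `P`. -/
def IsSubpath {V : Type*} (par : V → Option V) (P Q : V × V) : Prop :=
  Anc par P.1 Q.1 ∧ Anc par Q.1 Q.2 ∧ Anc par Q.2 P.2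

namespace IntervalCover

open Finset

variable {ι : Type*} [Fintype ι] (a b : ι → ℕ)

def greedyReach (q : ℕ) : ℕ := max q ((univ.filter (a · ≤ q)).sup b)

def greedyChain (t : ℕ) : ℕ := (greedyReach a b)^[t] 0

variable {a b}

theorem le_greedyReach (q : ℕ) : q ≤ greedyReach a b q := le_max_left _ _

theorem le_greedyReach_of_le {j : ι} {q : ℕ} (h : a j ≤ q) : b j ≤ greedyReach a b q :=
  le_max_of_le_right (le_sup (mem_filter.2 ⟨mem_univ j, h⟩))

theorem lt_greedyReach {q : ℕ} (h : ∃ j, a j ≤ q ∧ q < b j) : q < greedyReach a b q := by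
  obtain ⟨j, hj, hqj⟩ := h
  exact hqj.trans_le (le_greedyReach_of_le hj)

theorem exists_eq_greedyReach {q : ℕ} (h : q < greedyReach a b q) :
    ∃ i, a i ≤ q ∧ greedyReach a b q = b i := by
  have hq : q < (univ.filter (a · ≤ q)).sup b := by simpa [greedyReach] using h
  have hne : (univ.filter (a · ≤ q)).Nonempty :=
    nonempty_iff_ne_empty.2 fun he => by simp [he] at hq
  obtain ⟨i, hi, hib⟩ := exists_mem_eq_sup _ hne b
  exact ⟨i, (mem_filter.1 hi).2, by rw [greedyReach, max_eq_right hq.le, hib]⟩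

theorem greedyChain_succ (t : ℕ) :
    greedyChain a b (t + 1) = greedyReach a b (greedyChain a b t) :=
  Function.iterate_succ_apply' _ _ _

theorem monotone_greedyChain : Monotone (greedyChain a b) :=
  monotone_nat_of_le_succ fun t => (greedyChain_succ (a := a) (b := b) t).symm ▸ le_greedyReach _

theorem min_le_greedyChain {n : ℕ} (hcov : ∀ e < n, ∃ j, a j ≤ e ∧ e < b j) (t : ℕ) :
    min t n ≤ greedyChain a b t := by
  induction t with
  | zero => simp
  | succ t ih =>
    rw [greedyChain_succ]
    by_cases ht : greedyChain a b t < n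
    · have := lt_greedyReach (hcov _ ht)
      omega
    · have := le_greedyReach (a := a) (b := b) (greedyChain a b t)
      omega

theorem card_meets_le_two (j : ι) (m : ℕ) :
    #{t ∈ range m | a j < greedyChain a b (t + 1) ∧ greedyChain a b t < b j} ≤ 2 := by
  set s := {t ∈ range m | a j < greedyChain a b (t + 1) ∧ greedyChain a b t < b j}
  rcases s.eq_empty_or_nonempty with hs | hs
  · simp [hs]
  have hsub : s ⊆ Icc (s.min' hs) (s.min' hs + 1) := by
    intro t ht
    refine mem_Icc.2 ⟨min'_le s t ht, not_lt.1 fun hlt => ?_⟩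
    have hbj : b j ≤ greedyChain a b (s.min' hs + 2) := by
      rw [greedyChain_succ]
      exact le_greedyReach_of_le (mem_filter.1 (min'_mem s hs)).2.1.le
    have hmono := monotone_greedyChain (a := a) (b := b) (show s.min' hs + 2 ≤ t by omega)
    have hlt' := (mem_filter.1 ht).2.2
    omega
  calc #s ≤ #(Icc (s.min' hs) (s.min' hs + 1)) := card_le_card hsub
    _ = 2 := by rw [Nat.card_Icc]; omega

theorem sum_card_meets_le (m : ℕ) :
    ∑ t ∈ range m, #{j | a j < greedyChain a b (t + 1) ∧ greedyChain a b t < b j} ≤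
      2 * Fintype.card ι :=
  calc _ = ∑ j, #{t ∈ range m | a j < greedyChain a b (t + 1) ∧ greedyChain a b t < b j} :=
        sum_card_bipartiteAbove_eq_sum_card_bipartiteBelow
          fun t j => a j < greedyChain a b (t + 1) ∧ greedyChain a b t < b j
    _ ≤ ∑ _j : ι, 2 := sum_le_sum fun j _ => card_meets_le_two j m
    _ = 2 * Fintype.card ι := by simp [mul_comm]

theorem exists_sparse_subinterval {n : ℕ} (hcov : ∀ e < n, ∃ j, a j ≤ e ∧ e < b j) {c : ℝ}
    (hc : 0 < c) (hn : 2 * c * Fintype.card ι < n) :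
    ∃ i y x, a i ≤ y ∧ y < x ∧ x ≤ b i ∧ c * #{j | a j < x ∧ y < b j} < (x - y : ℕ) := by
  have hlen :
      (n : ℝ) ≤ ∑ t ∈ range n, ((greedyChain a b (t + 1) - greedyChain a b t : ℕ) : ℝ) := by
    rw [← Nat.cast_sum, sum_range_tsub monotone_greedyChain]
    simpa [greedyChain] using min_le_greedyChain hcov n
  have hcnt : ∑ t ∈ range n, c * #{j | a j < greedyChain a b (t + 1) ∧ greedyChain a b t < b j}
      ≤ 2 * c * Fintype.card ι := by
    rw [← mul_sum, mul_comm 2 c, mul_assoc]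
    gcongr
    exact_mod_cast sum_card_meets_le n
  obtain ⟨t, -, ht⟩ := exists_lt_of_sum_lt (hcnt.trans_lt (hn.trans_le hlen))
  have hlt : greedyChain a b t < greedyChain a b (t + 1) := by
    have : (0 : ℝ) < (greedyChain a b (t + 1) - greedyChain a b t : ℕ) :=
      lt_of_le_of_lt (by positivity) ht
    exact Nat.sub_pos_iff_lt.1 (by exact_mod_cast this)
  obtain ⟨i, hai, hbi⟩ := exists_eq_greedyReach ((greedyChain_succ (a := a) (b := b) t) ▸ hlt)
  exact ⟨i, _, _, hai, hlt, ((greedyChain_succ t).trans hbi).le, ht⟩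

end IntervalCover

section FiniteLinearOrder

open Finset

theorem OrderIso.ncard_Ioc_eq {α : Type*} [Preorder α] {m : ℕ} (e : α ≃o Fin m) (u w : α) :
    (Set.Ioc u w).ncard = e w - e u := by
  rw [← Set.ncard_image_of_injective _ e.injective, e.image_Ioc, ← coe_Ioc, Set.ncard_coe_finset,
    Fin.card_Ioc]

theorem exists_sparse_Ioc {α ι : Type*} [LinearOrder α] [Fintype α] [Fintype ι] (P : ι → α × α)
    (hcover : ∀ v, ¬ IsMin v → ∃ j, v ∈ Set.Ioc (P j).1 (P j).2) {c : ℝ} (hc : 0 < c)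
    (hsize : 2 * c * Fintype.card ι < (Fintype.card α - 1 : ℕ)) :
    ∃ i u w, (P i).1 ≤ u ∧ u < w ∧ w ≤ (P i).2 ∧
      c * {j | (Set.Ioc u w ∩ Set.Ioc (P j).1 (P j).2).Nonempty}.ncard < (Set.Ioc u w).ncard := by
  set e := (Fintype.orderIsoFinOfCardEq α rfl).symm
  have hcov : ∀ x < Fintype.card α - 1, ∃ j, (e (P j).1 : ℕ) ≤ x ∧ x < e (P j).2 := by
    intro x hx
    obtain ⟨j, hj1, hj2⟩ := hcover (e.symm ⟨x + 1, by omega⟩)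
      (not_isMin_iff.2 ⟨e.symm ⟨x, by omega⟩, e.symm.lt_iff_lt.2 (by simp [Fin.lt_def])⟩)
    have h1 := e.lt_iff_lt.2 hj1
    have h2 := e.le_iff_le.2 hj2
    simp only [OrderIso.apply_symm_apply, Fin.lt_def, Fin.le_def] at h1 h2
    exact ⟨j, by omega, by omega⟩
  obtain ⟨i, y, x, hiy, hyx, hxi, hsparse⟩ :=
    IntervalCover.exists_sparse_subinterval hcov hc hsize
  have hx : x < Fintype.card α := hxi.trans_lt (e (P i).2).isLt
  refine ⟨i, e.symm ⟨y, by omega⟩, e.symm ⟨x, hx⟩, ?_, ?_, ?_, ?_⟩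
  · exact e.le_symm_apply.2 hiy
  · exact e.symm.lt_iff_lt.2 hyx
  · exact e.symm_apply_le.2 hxi
  · have hmeet : {j | (Set.Ioc (e.symm ⟨y, by omega⟩) (e.symm ⟨x, hx⟩) ∩
        Set.Ioc (P j).1 (P j).2).Nonempty}.ncard ≤ #{j | (e (P j).1 : ℕ) < x ∧ y < e (P j).2} := by
      rw [← Set.ncard_coe_finset]
      refine Set.ncard_le_ncard (fun j hj => ?_)
      rw [Set.mem_ofPred_eq, Set.Ioc_inter_Ioc, Set.nonempty_Ioc, max_lt_iff, lt_min_iff,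
        lt_min_iff] at hj
      simp only [coe_filter, mem_univ, true_and, Set.mem_ofPred_eq]
      exact ⟨e.lt_symm_apply.1 hj.2.1, e.symm_apply_lt.1 hj.1.2⟩
    rw [e.ncard_Ioc_eq, OrderIso.apply_symm_apply, OrderIso.apply_symm_apply]
    calc _ ≤ c * #{j | (e (P j).1 : ℕ) < x ∧ y < e (P j).2} := by gcongr
      _ < _ := hsparse

end FiniteLinearOrder

section RootedPath

variable {V : Type*} {par : V → Option V}

theorem anc_antisymm (hacyc : ParAcyclic par) {a b : V} (hab : Anc par a b) (hba : Anc par b a) :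
    a = b := by
  by_contra hne
  exact hacyc a (((Relation.reflTransGen_iff_eq_or_transGen.1 hab).resolve_left
    (Ne.symm hne)).trans_left hba)

theorem anc_total (hpath : ∀ a b c, par b = some a → par c = some a → b = c) {r : V}
    (hroot : ∀ v, Anc par r v) (a b : V) : Anc par a b ∨ Anc par b a :=
  Relation.ReflTransGen.total_of_right_unique (fun _ _ _ => hpath _ _ _) (hroot a) (hroot b)

noncomputable abbrev ancLinearOrder (hacyc : ParAcyclic par)
    (hpath : ∀ a b c, par b = some a → par c = some a → b = c) {r : V}
    (hroot : ∀ v, Anc par r v) : LinearOrder V where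
  le := Anc par
  le_refl _ := Relation.ReflTransGen.refl
  le_trans _ _ _ := Relation.ReflTransGen.trans
  le_antisymm _ _ := anc_antisymm hacyc
  le_total := anc_total hpath hroot
  toDecidableLE := Classical.decRel _

theorem forestEdges_eq_compl_root (hacyc : ParAcyclic par) {r : V} (hroot : ∀ v, Anc par r v) :
    forestEdges par = {r}ᶜ := by
  ext v
  simp only [forestEdges, Set.mem_ofPred_eq, Set.mem_compl_singleton_iff,
    Option.ne_none_iff_exists']
  constructor
  · rintro ⟨w, hw⟩ rfl
    exact hacyc _ (.tail' (hroot w) hw)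
  · intro hv
    obtain ⟨w, -, hw⟩ := (hroot v).cases_tail.resolve_left hv
    exact ⟨w, hw⟩

theorem dpEdges_eq_Ioc [LinearOrder V] (hle : ∀ a b : V, a ≤ b ↔ Anc par a b) (Q : V × V) :
    dpEdges par Q = Set.Ioc Q.1 Q.2 := by
  ext v
  simp only [dpEdges, Set.mem_Ioc, lt_iff_le_and_ne, hle, Set.mem_ofPred_eq]
  tauto

end RootedPath

theorem sparse_path_in_path_general {V : Type*} [Fintype V] (par : V → Option V)
    (hacyc : ParAcyclic par) (r : V) (hroot : ∀ v, Anc par r v)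
    (hpath : ∀ a b c, par b = some a → par c = some a → b = c)
    (k : ℕ) (hk : 1 ≤ k) (P : Fin k → V × V)
    (hcover : ∀ v ∈ forestEdges par, ∃ i, v ∈ dpEdges par (P i))
    (c : ℝ) (hc : 1 ≤ c)
    (hsize : 4 * c * k ≤ ((forestEdges par).ncard : ℝ)) :
    ∃ i, ∃ Q : V × V, IsSubpath par (P i) Q ∧ Q.1 ≠ Q.2 ∧
      (({j | (dpEdges par Q ∩ dpEdges par (P j)).Nonempty}).ncard : ℝ)
        ≤ ((dpEdges par Q).ncard : ℝ) / c := by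
  let := ancLinearOrder hacyc hpath hroot
  have hdp : ∀ Q, dpEdges par Q = Set.Ioc Q.1 Q.2 := dpEdges_eq_Ioc fun _ _ => Iff.rfl
  have hedges := forestEdges_eq_compl_root hacyc hroot
  have hcard : (forestEdges par).ncard = Fintype.card V - 1 := by
    rw [hedges, Set.ncard_compl, Set.ncard_singleton, Nat.card_eq_fintype_card]
  have hmin : IsMin r := fun w _ => hroot w
  obtain ⟨i, u, w, hiu, huw, hwi, hsparse⟩ := exists_sparse_Ioc P (c := c)
    (fun v hv => by
      simpa only [← hdp] using hcover v (hedges ▸ fun hvr : v = r => hv (hvr ▸ hmin)))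
    (by positivity)
    (by
      have hck : 0 < c * k := mul_pos (by linarith) (by exact_mod_cast hk)
      rw [Fintype.card_fin, ← hcard]
      linarith)
  refine ⟨i, (u, w), ⟨hiu, huw.le, hwi⟩, huw.ne, ?_⟩
  simp only [hdp]
  rw [le_div_iff₀ (by positivity)]
  linarith

/-- if a rooted tree which is a path is edge-covered by `k` descending
paths `P₁,…,P_k` and has at least `4ck` edges (`c ≥ 1`), then some `Pᵢ` contains a
`c`-sparse subpath `Q`: a subpath with at least one edge meeting at most `|E(Q)|/c`
of the paths on an edge. -/
theorem sparse_path_in_path {V : Type*} [Fintype V] (par : V → Option V)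
    (hacyc : ParAcyclic par) (r : V) (hroot : ∀ v, Anc par r v)
    (hpath : ∀ a b c, par b = some a → par c = some a → b = c)
    (k : ℕ) (hk : 1 ≤ k) (P : Fin k → V × V) (hP : ∀ i, IsDescPath par (P i))
    (hcover : ∀ v ∈ forestEdges par, ∃ i, v ∈ dpEdges par (P i))
    (c : ℝ) (hc : 1 ≤ c)
    (hsize : 4 * c * k ≤ ((forestEdges par).ncard : ℝ)) :
    ∃ i, ∃ Q : V × V, IsSubpath par (P i) Q ∧ Q.1 ≠ Q.2 ∧
      (({j | (dpEdges par Q ∩ dpEdges par (P j)).Nonempty}).ncard : ℝ)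
        ≤ ((dpEdges par Q).ncard : ℝ) / c :=
  sparse_path_in_path_general par hacyc r hroot hpath k hk P hcover c hc hsize
end

section
/- Let T be a rooted forest and P₁,…,P_k descending paths whose edge sets cover all edges of T. If |E(T)| ≥ 4ck(1 + log₂ k) for some constant c ≥ 1, then there exists a c-sparse descending path: a subpath Q (with at least one edge) of some P_i that shares at least one edge with at most |E(Q)|/c of the paths P₁,…,P_k. -/
/-!
Let `ν(w)` be the number of paths `P j` with an edge weakly below the edge `w`, and split the
forest into heavy lines, each continuing to a child edge of maximal `ν`. A path `P j` enters a new
line only at its top edge or at a light child, which at least halves `ν`; as `1 ≤ ν ≤ k` along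
`P j`, it meets at most `1 + log₂ k` lines. On each line the greedy cover by maximal pieces of the
paths gives windows, each a subpath of some `P i`, such that every `P j` meets at most two windows
per line. The windows cover all edges and have at most `2k(1 + log₂ k)` incidences with the paths
in total, so if each window `Q` met more than `|E(Q)|/c` paths, the forest would have fewer than
`2ck(1 + log₂ k)` edges.
-/

open Finset
open scoped Classical

section Ancestry

variable {V : Type*} {par : V → Option V} {a b c p v x y : V}

theorem Anc.trans (h₁ : Anc par a b) (h₂ : Anc par b c) : Anc par a c :=
  Relation.ReflTransGen.trans h₁ h₂

theorem Anc.of_parent (h : par b = some a) : Anc par a b :=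
  Relation.ReflTransGen.single h

theorem Anc.eq_or_anc_parent (h : Anc par a b) :
    b = a ∨ ∃ p, par b = some p ∧ Anc par a p := by
  rcases h.cases_tail with rfl | ⟨p, hap, hp⟩
  · exact Or.inl rfl
  · exact Or.inr ⟨p, hp, hap⟩

theorem Anc.anc_parent (h : Anc par a b) (hne : a ≠ b) (hp : par b = some p) : Anc par a p := by
  rcases h.eq_or_anc_parent with rfl | ⟨q, hq, haq⟩
  · exact absurd rfl hne
  · exact Option.some_injective _ (hq.symm.trans hp) ▸ haq

theorem Anc.mem_forestEdges (h : Anc par a b) (hne : a ≠ b) : b ∈ forestEdges par := by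
  rcases h.eq_or_anc_parent with rfl | ⟨p, hp, -⟩
  · exact absurd rfl hne
  · simp [forestEdges, hp]

theorem Anc.total (ha : Anc par a v) (hb : Anc par b v) : Anc par a b ∨ Anc par b a := by
  have hunique : Relator.RightUnique (Function.swap (parentRel par)) :=
    fun _ _ _ h₁ h₂ => Option.some_injective _ (h₁.symm.trans h₂)
  rw [Anc, Anc, ← Relation.reflTransGen_swap, ← Relation.reflTransGen_swap (r := parentRel par)]
  exact (Relation.ReflTransGen.total_of_right_unique hunique
    (Relation.reflTransGen_swap.2 ha) (Relation.reflTransGen_swap.2 hb)).symm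

/-- The descending path whose edges are `x`, …, `y`, for an edge `x`. -/
def edgeInterval (par : V → Option V) (x y : V) : V × V := ((par x).getD x, y)

theorem isSubpath_edgeInterval {Q : V × V} {x y : V} (hx : x ∈ dpEdges par Q)
    (hy : y ∈ dpEdges par Q) (hxy : Anc par x y) : IsSubpath par Q (edgeInterval par x y) := by
  obtain ⟨p, hp⟩ := Option.ne_none_iff_exists'.1 (hx.1.mem_forestEdges (Ne.symm hx.2.1))
  simp only [edgeInterval, hp, Option.getD_some]
  exact ⟨hx.1.anc_parent (Ne.symm hx.2.1) hp, (Anc.of_parent hp).trans hxy, hy.2.2⟩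

namespace ParAcyclic

variable (hacyc : ParAcyclic par)
include hacyc

theorem not_anc_parent (hp : par a = some p) : ¬ Anc par a p :=
  fun h => hacyc a (Relation.TransGen.tail' h hp)

theorem ne_parent (hp : par a = some p) : a ≠ p :=
  fun h => hacyc.not_anc_parent hp (h ▸ Relation.ReflTransGen.refl)

theorem anc_antisymm (h₁ : Anc par a b) (h₂ : Anc par b a) : a = b := by
  by_contra hne
  rcases h₂.eq_or_anc_parent with rfl | ⟨p, hp, hbp⟩
  · exact hne rfl
  · exact hacyc.not_anc_parent hp (h₁.trans hbp)

theorem mem_dpEdges_of_anc_of_anc {Q : V × V} {x y z : V} (hx : x ∈ dpEdges par Q)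
    (hy : y ∈ dpEdges par Q) (hxz : Anc par x z) (hzy : Anc par z y) : z ∈ dpEdges par Q :=
  ⟨hx.1.trans hxz, fun h => hx.2.1 (hacyc.anc_antisymm hx.1 (h ▸ hxz)).symm, hzy.trans hy.2.2⟩

theorem eq_of_anc_of_parent_eq {w w' u : V} (hw : par w = some u) (hw' : par w' = some u)
    (h : Anc par w w') : w = w' := by
  by_contra hne
  exact hacyc.not_anc_parent hw (h.anc_parent hne hw')

theorem mem_dpEdges_edgeInterval (hx : x ∈ forestEdges par) (hxy : Anc par x y) :
    v ∈ dpEdges par (edgeInterval par x y) ↔ Anc par x v ∧ Anc par v y := by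
  obtain ⟨p, hp⟩ := Option.ne_none_iff_exists'.1 hx
  simp only [edgeInterval, hp, Option.getD_some]
  refine ⟨fun ⟨hpv, hvp, hvy⟩ => ⟨?_, hvy⟩,
    fun ⟨hxv, hvy⟩ => ⟨(Anc.of_parent hp).trans hxv, ?_, hvy⟩⟩
  · rcases hxy.total hvy with h | h
    · exact h
    · by_cases hvx : v = x
      · exact hvx ▸ Relation.ReflTransGen.refl
      · exact absurd (hacyc.anc_antisymm (h.anc_parent hvx hp) hpv) hvp
  · rintro rfl
    exact hacyc.not_anc_parent hp hxv

theorem edgeInterval_fst_ne_snd (hx : x ∈ forestEdges par) (hxy : Anc par x y) :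
    (edgeInterval par x y).1 ≠ (edgeInterval par x y).2 := by
  obtain ⟨p, hp⟩ := Option.ne_none_iff_exists'.1 hx
  simp only [edgeInterval, hp, Option.getD_some]
  rintro rfl
  exact hacyc.not_anc_parent hp hxy

end ParAcyclic

end Ancestry

section Depth

variable {V : Type*} [Fintype V] {par : V → Option V} {a b : V}

noncomputable def depth (par : V → Option V) (v : V) : ℕ := #{a | Anc par a v}

theorem Anc.depth_le (h : Anc par a b) : depth par a ≤ depth par b :=
  card_le_card fun _ hx => mem_filter.2 ⟨mem_univ _, (mem_filter.1 hx).2.trans h⟩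

theorem ParAcyclic.depth_lt (hacyc : ParAcyclic par) (h : Anc par a b) (hne : a ≠ b) :
    depth par a < depth par b := by
  refine card_lt_card
    ⟨fun _ hx => mem_filter.2 ⟨mem_univ _, (mem_filter.1 hx).2.trans h⟩, ?_⟩
  intro hsub
  have hb : b ∈ ({x | Anc par x a} : Finset V) :=
    hsub (mem_filter.2 ⟨mem_univ _, Relation.ReflTransGen.refl⟩)
  exact hne (hacyc.anc_antisymm h (mem_filter.1 hb).2)

theorem ParAcyclic.anc_iff_depth_le (hacyc : ParAcyclic par) (hab : Anc par a b ∨ Anc par b a) :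
    Anc par a b ↔ depth par a ≤ depth par b := by
  refine ⟨Anc.depth_le, fun hle => hab.elim id fun hba => ?_⟩
  by_cases heq : b = a
  · exact heq ▸ Relation.ReflTransGen.refl
  · exact absurd hle (not_le.2 (hacyc.depth_lt hba heq))

end Depth

section HeavyChild

variable {V ι : Type*} [Fintype V] [Fintype ι] {par : V → Option V} {P : ι → V × V}
  {u w w' : V}

noncomputable def pathsBelow (par : V → Option V) (P : ι → V × V) (w : V) : Finset ι :=
  {i | ∃ x, Anc par w x ∧ x ∈ dpEdges par (P i)}

theorem pathsBelow_anti (h : Anc par u w) : pathsBelow par P w ⊆ pathsBelow par P u := by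
  intro i hi
  obtain ⟨x, hwx, hx⟩ := (mem_filter.1 hi).2
  exact mem_filter.2 ⟨mem_univ _, x, h.trans hwx, hx⟩

theorem mem_pathsBelow_of_mem_dpEdges {i : ι} (h : w ∈ dpEdges par (P i)) :
    i ∈ pathsBelow par P w :=
  mem_filter.2 ⟨mem_univ _, w, Relation.ReflTransGen.refl, h⟩

/-- The edges of a descending path form a chain, so no path has edges below two siblings. -/
theorem ParAcyclic.disjoint_pathsBelow (hacyc : ParAcyclic par) (hw : par w = some u)
    (hw' : par w' = some u) (hne : w ≠ w') :
    Disjoint (pathsBelow par P w) (pathsBelow par P w') := by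
  refine disjoint_left.2 fun i hi hi' => ?_
  obtain ⟨x, hwx, hx⟩ := (mem_filter.1 hi).2
  obtain ⟨y, hw'y, hy⟩ := (mem_filter.1 hi').2
  have hcomp : Anc par w w' ∨ Anc par w' w := by
    rcases hx.2.2.total hy.2.2 with hxy | hyx
    · exact (hwx.trans hxy).total hw'y
    · exact hwx.total (hw'y.trans hyx)
  rcases hcomp with h | h
  · exact hne (hacyc.eq_of_anc_of_parent_eq hw hw' h)
  · exact hne (hacyc.eq_of_anc_of_parent_eq hw' hw h).symm

theorem ParAcyclic.card_pathsBelow_add_le (hacyc : ParAcyclic par) (hw : par w = some u)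
    (hw' : par w' = some u) (hne : w ≠ w') :
    #(pathsBelow par P w) + #(pathsBelow par P w') ≤ #(pathsBelow par P u) := by
  rw [← card_union_of_disjoint (hacyc.disjoint_pathsBelow hw hw' hne)]
  exact card_le_card (union_subset (pathsBelow_anti (.of_parent hw))
    (pathsBelow_anti (.of_parent hw')))

/-- A child of `u` below which the most paths have an edge (junk value `u` for a leaf). -/
noncomputable def heavyChild (par : V → Option V) (P : ι → V × V) (u : V) : V :=
  if h : ({w | par w = some u} : Finset V).Nonempty then
    (exists_max_image _ (fun w => #(pathsBelow par P w)) h).choose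
  else u

theorem parent_heavyChild (hw : par w = some u) : par (heavyChild par P u) = some u := by
  have h : ({w | par w = some u} : Finset V).Nonempty := ⟨w, mem_filter.2 ⟨mem_univ _, hw⟩⟩
  rw [heavyChild, dif_pos h]
  exact (mem_filter.1 (exists_max_image _ (fun w => #(pathsBelow par P w)) h).choose_spec.1).2

theorem card_pathsBelow_le_heavyChild (hw : par w = some u) :
    #(pathsBelow par P w) ≤ #(pathsBelow par P (heavyChild par P u)) := by
  have hmem : w ∈ ({w | par w = some u} : Finset V) := mem_filter.2 ⟨mem_univ _, hw⟩
  rw [heavyChild, dif_pos ⟨w, hmem⟩]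
  exact (exists_max_image _ (fun w => #(pathsBelow par P w)) ⟨w, hmem⟩).choose_spec.2 w hmem

theorem ParAcyclic.two_mul_card_pathsBelow_le (hacyc : ParAcyclic par) (hw : par w = some u)
    (hne : w ≠ heavyChild par P u) :
    2 * #(pathsBelow par P w) ≤ #(pathsBelow par P u) := by
  have := hacyc.card_pathsBelow_add_le (P := P) hw (parent_heavyChild hw) hne
  have := card_pathsBelow_le_heavyChild (par := par) (P := P) hw
  omega

end HeavyChild

section Lines

variable {V ι : Type*} [Fintype V] [Fintype ι] {par : V → Option V} {P : ι → V × V}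
  {t t' v x y : V}

/-- The edge `y` continues the heavy line of the edge `x` (edges being named by their lower
endpoints). -/
def HeavyStep (par : V → Option V) (P : ι → V × V) (x y : V) : Prop :=
  x ∈ forestEdges par ∧ par y = some x ∧ y = heavyChild par P x

def IsLineTop (par : V → Option V) (P : ι → V × V) (t : V) : Prop :=
  t ∈ forestEdges par ∧ ∀ x, ¬ HeavyStep par P x t

def OnLine (par : V → Option V) (P : ι → V × V) (t x : V) : Prop :=
  IsLineTop par P t ∧ Relation.ReflTransGen (HeavyStep par P) t x

theorem HeavyStep.anc_of_reflTransGen (h : Relation.ReflTransGen (HeavyStep par P) x y) :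
    Anc par x y :=
  Relation.ReflTransGen.mono (fun _ _ hs => hs.2.1) _ _ h

theorem OnLine.anc (h : OnLine par P t x) : Anc par t x :=
  HeavyStep.anc_of_reflTransGen h.2

theorem OnLine.mem_forestEdges (h : OnLine par P t x) : x ∈ forestEdges par := by
  rcases h.2.cases_tail with rfl | ⟨c, -, hc⟩
  · exact h.1.1
  · simp [forestEdges, hc.2.1]

theorem OnLine.total (hx : OnLine par P t x) (hy : OnLine par P t y) :
    Anc par x y ∨ Anc par y x := by
  have hunique : Relator.RightUnique (HeavyStep par P) :=
    fun _ _ _ h₁ h₂ => h₁.2.2.trans h₂.2.2.symm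
  exact (Relation.ReflTransGen.total_of_right_unique hunique hx.2 hy.2).imp
    HeavyStep.anc_of_reflTransGen HeavyStep.anc_of_reflTransGen

theorem OnLine.unique (h : OnLine par P t x) (h' : OnLine par P t' x) : t = t' := by
  have hunique : Relator.RightUnique (Function.swap (HeavyStep par P)) :=
    fun _ _ _ h₁ h₂ => Option.some_injective _ (h₁.2.1.symm.trans h₂.2.1)
  rcases Relation.ReflTransGen.total_of_right_unique hunique
    (Relation.reflTransGen_swap.2 h.2) (Relation.reflTransGen_swap.2 h'.2) with h₁ | h₁
  · rcases (Relation.reflTransGen_swap.1 h₁).cases_tail with rfl | ⟨c, -, hc⟩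
    · rfl
    · exact absurd hc (h.1.2 c)
  · rcases (Relation.reflTransGen_swap.1 h₁).cases_tail with h₂ | ⟨c, -, hc⟩
    · exact h₂.symm
    · exact absurd hc (h'.1.2 c)

namespace ParAcyclic

variable (hacyc : ParAcyclic par)
include hacyc

theorem onLine_of_anc (hx : OnLine par P t x) (htv : Anc par t v) (hvx : Anc par v x) :
    OnLine par P t v := by
  obtain ⟨htop, hline⟩ := hx
  induction hline with
  | refl => exact hacyc.anc_antisymm htv hvx ▸ ⟨htop, .refl⟩
  | tail hty hyx ih =>
    rcases hvx.eq_or_anc_parent with rfl | ⟨p, hp, hvp⟩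
    · exact ⟨htop, hty.tail hyx⟩
    · exact ih (Option.some_injective _ (hp.symm.trans hyx.2.1) ▸ hvp)

theorem exists_onLine (hx : x ∈ forestEdges par) : ∃ t, OnLine par P t x := by
  induction hd : depth par x using Nat.strong_induction_on generalizing x with
  | _ n ih =>
    by_cases htop : ∀ y, ¬ HeavyStep par P y x
    · exact ⟨x, ⟨hx, htop⟩, .refl⟩
    · push Not at htop
      obtain ⟨y, hy⟩ := htop
      have hlt : depth par y < n :=
        hd ▸ hacyc.depth_lt (.of_parent hy.2.1) (hacyc.ne_parent hy.2.1).symm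
      obtain ⟨t, ht⟩ := ih _ hlt hy.1 rfl
      exact ⟨t, ht.1, ht.2.tail hy⟩

end ParAcyclic

end Lines

section IntervalCover

variable {β ι : Type*} [LinearOrder β] [Fintype ι]

theorem card_filter_insert_le {α : Type*} [DecidableEq α] (p : α → Prop) [DecidablePred p]
    (a : α) (s : Finset α) : #{x ∈ insert a s | p x} ≤ #{x ∈ s | p x} + 1 := by
  rw [filter_insert]
  split_ifs
  · exact card_insert_le _ _
  · exact Nat.le_succ _

theorem exists_greedy_window (T : ι → Set β) {L : Finset β}
    (hL : ∀ x ∈ L, ∃ j, x ∈ T j) (hne : L.Nonempty) :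
    ∃ a ∈ L, ∃ b, (∀ x ∈ L, a ≤ x) ∧ (∃ j, a ∈ T j ∧ b ∈ T j) ∧
      ∀ x ∈ L, ∀ j, a ∈ T j → x ∈ T j → x ≤ b := by
  let R := L.filter fun x => ∃ j, L.min' hne ∈ T j ∧ x ∈ T j
  have hR : R.Nonempty :=
    let ⟨j, hj⟩ := hL _ (L.min'_mem hne)
    ⟨_, mem_filter.2 ⟨L.min'_mem hne, j, hj, hj⟩⟩
  exact ⟨L.min' hne, L.min'_mem hne, R.max' hR, fun x hx => L.min'_le x hx,
    (mem_filter.1 (R.max'_mem hR)).2,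
    fun x hx j ha hx' => R.le_max' x (mem_filter.2 ⟨hx, j, ha, hx'⟩)⟩

/-- The first window of the greedy cover runs from the least point `a` to the furthest point `b`
reached by an interval through `a`. An interval meeting it and a later window contains a point
below all later windows, so by the last clause it meets only one of those. -/
theorem exists_greedy_intervalCover (T : ι → Set β) (hT : ∀ j, (T j).OrdConnected)
    (L : Finset β) (hL : ∀ x ∈ L, ∃ j, x ∈ T j) :
    ∃ W : Finset (β × β),
      (∀ w ∈ W, w.1 ∈ L ∧ w.1 ≤ w.2 ∧ ∃ j, Set.Icc w.1 w.2 ⊆ T j) ∧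
      (∀ x ∈ L, ∃ w ∈ W, x ∈ Set.Icc w.1 w.2) ∧
      (∀ j, #{w ∈ W | (Set.Icc w.1 w.2 ∩ T j).Nonempty} ≤ 2) ∧
      ∀ j, ∀ a ∈ T j, (∀ x ∈ L, a ≤ x) →
        #{w ∈ W | (Set.Icc w.1 w.2 ∩ T j).Nonempty} ≤ 1 := by
  induction L using Finset.strongInduction with
  | H L ih =>
  rcases L.eq_empty_or_nonempty with rfl | hne
  · exact ⟨∅, by simp⟩
  obtain ⟨a, haL, b, hmin, ⟨j₀, haj₀, hbj₀⟩, hb_max⟩ := exists_greedy_window T hL hne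
  have hab : a ≤ b := hb_max a haL j₀ haj₀ haj₀
  obtain ⟨W', hW'win, hW'cov, hW'two, hW'one⟩ :=
    ih (L.filter (b < ·)) (filter_ssubset.2 ⟨a, haL, not_lt.2 hab⟩)
      fun x hx => hL x (mem_filter.1 hx).1
  refine ⟨insert (a, b) W', fun w hw => ?_, fun x hx => ?_, fun j => ?_,
    fun j a' ha' ha'L => ?_⟩
  · rcases mem_insert.1 hw with rfl | hw
    · exact ⟨haL, hab, j₀, (hT j₀).out haj₀ hbj₀⟩
    · obtain ⟨hw1, hw2⟩ := hW'win w hw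
      exact ⟨(mem_filter.1 hw1).1, hw2⟩
  · by_cases hxb : x ≤ b
    · exact ⟨(a, b), mem_insert_self _ _, hmin x hx, hxb⟩
    · obtain ⟨w, hw, hxw⟩ := hW'cov x (mem_filter.2 ⟨hx, not_le.1 hxb⟩)
      exact ⟨w, mem_insert_of_mem hw, hxw⟩
  · by_cases hmeet : (Set.Icc a b ∩ T j).Nonempty
    · obtain ⟨y, ⟨-, hyb⟩, hy⟩ := hmeet
      have := hW'one j y hy fun x hx => hyb.trans (mem_filter.1 hx).2.le
      exact (card_filter_insert_le _ _ _).trans (Nat.succ_le_succ this)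
    · rw [filter_insert, if_neg hmeet]
      exact hW'two j
  · suffices h : #{w ∈ W' | (Set.Icc w.1 w.2 ∩ T j).Nonempty} = 0 from
      (card_filter_insert_le _ _ _).trans (Nat.succ_le_succ h.le)
    refine card_eq_zero.2 (filter_eq_empty_iff.2 fun w hw ⟨z, ⟨hwz, _⟩, hz⟩ => ?_)
    obtain ⟨hw1L, hbw⟩ := mem_filter.1 (hW'win w hw).1
    have haw : a ≤ w.1 := hmin _ hw1L
    have hw1 : w.1 ∈ T j := (hT j).out ha' hz ⟨(ha'L a haL).trans haw, hwz⟩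
    have ha : a ∈ T j := (hT j).out ha' hz ⟨ha'L a haL, haw.trans hwz⟩
    exact absurd (hb_max _ hw1L j ha hw1) (not_le.2 hbw)

end IntervalCover

section LineWindows

variable {V ι : Type*} [Fintype V] [Fintype ι] {par : V → Option V} {P : ι → V × V}

namespace ParAcyclic

variable (hacyc : ParAcyclic par)
include hacyc

noncomputable abbrev lineOrder (P : ι → V × V) (t : V) : LinearOrder {x // OnLine par P t x} :=
  LinearOrder.lift' (fun x => depth par x.1) fun x y h => Subtype.ext <| by
    by_contra hne
    rcases x.2.total y.2 with hxy | hyx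
    · exact (hacyc.depth_lt hxy hne).ne h
    · exact (hacyc.depth_lt hyx (Ne.symm hne)).ne h.symm

theorem exists_line_windows (hcover : ∀ v ∈ forestEdges par, ∃ i, v ∈ dpEdges par (P i))
    (t : V) :
    ∃ W : Finset (V × V),
      (∀ Q ∈ W, (∃ i, IsSubpath par (P i) Q) ∧ Q.1 ≠ Q.2 ∧
        ∀ v ∈ dpEdges par Q, OnLine par P t v) ∧
      (∀ v, OnLine par P t v → ∃ Q ∈ W, v ∈ dpEdges par Q) ∧
      ∀ j, #{Q ∈ W | (dpEdges par Q ∩ dpEdges par (P j)).Nonempty} ≤ 2 := by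
  let := hacyc.lineOrder P t
  have hle : ∀ x y : {x // OnLine par P t x}, x ≤ y ↔ Anc par x.1 y.1 :=
    fun x y => (hacyc.anc_iff_depth_le (x.2.total y.2)).symm
  obtain ⟨W, hWwin, hWcov, hWtwo, -⟩ := exists_greedy_intervalCover
    (fun j => {x : {x // OnLine par P t x} | x.1 ∈ dpEdges par (P j)})
    (fun j => ⟨fun x hx y hy z hz =>
      hacyc.mem_dpEdges_of_anc_of_anc hx hy ((hle _ _).1 hz.1) ((hle _ _).1 hz.2)⟩)
    univ (fun x _ => hcover x.1 x.2.mem_forestEdges)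
  let path : {x // OnLine par P t x} × {x // OnLine par P t x} → V × V :=
    fun w => edgeInterval par w.1.1 w.2.1
  have hmem : ∀ w ∈ W, ∀ v,
      v ∈ dpEdges par (path w) ↔ ∃ z ∈ Set.Icc w.1 w.2, z.1 = v := by
    intro w hw v
    rw [hacyc.mem_dpEdges_edgeInterval w.1.2.mem_forestEdges ((hle _ _).1 (hWwin w hw).2.1)]
    refine ⟨fun ⟨hxv, hvy⟩ => ?_,
      fun ⟨z, ⟨hxz, hzy⟩, hz⟩ => hz ▸ ⟨(hle _ _).1 hxz, (hle _ _).1 hzy⟩⟩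
    have hv : OnLine par P t v := hacyc.onLine_of_anc w.2.2 (w.1.2.anc.trans hxv) hvy
    exact ⟨⟨v, hv⟩, ⟨(hle _ _).2 hxv, (hle _ _).2 hvy⟩, rfl⟩
  refine ⟨W.image path, ?_, fun v hv => ?_, fun j => ?_⟩
  · simp only [mem_image]
    rintro _ ⟨w, hw, rfl⟩
    obtain ⟨-, hxy, i, hi⟩ := hWwin w hw
    refine ⟨⟨i, isSubpath_edgeInterval (hi ⟨le_rfl, hxy⟩) (hi ⟨hxy, le_rfl⟩)
      ((hle _ _).1 hxy)⟩,
      hacyc.edgeInterval_fst_ne_snd w.1.2.mem_forestEdges ((hle _ _).1 hxy), fun v hv => ?_⟩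
    obtain ⟨z, -, rfl⟩ := (hmem w hw v).1 hv
    exact z.2
  · obtain ⟨w, hw, hvw⟩ := hWcov ⟨v, hv⟩ (mem_univ _)
    exact ⟨path w, mem_image_of_mem _ hw, (hmem w hw v).2 ⟨_, hvw, rfl⟩⟩
  · rw [filter_image]
    refine card_image_le.trans ((card_le_card fun w hw => ?_).trans (hWtwo j))
    obtain ⟨hw, v, hvw, hvj⟩ := mem_filter.1 hw
    obtain ⟨z, hz, rfl⟩ := (hmem w hw v).1 hvw
    exact mem_filter.2 ⟨hw, z, hz, hvj⟩

end ParAcyclic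

end LineWindows

theorem card_le_log_of_two_mul_le {α : Type*} (S : Finset α) (f : α → ℕ) (M : ℕ)
    (hpos : ∀ x ∈ S, 0 < f x) (hM : ∀ x ∈ S, f x ≤ M)
    (hhalf : ∀ x ∈ S, ∀ y ∈ S, x ≠ y → 2 * f x ≤ f y ∨ 2 * f y ≤ f x) :
    #S ≤ Nat.log 2 M + 1 := by
  have hlog : ∀ x ∈ S, ∀ y, 2 * f x ≤ f y → Nat.log 2 (f x) < Nat.log 2 (f y) := by
    intro x hx y h
    calc Nat.log 2 (f x) < Nat.log 2 (f x * 2) := by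
          rw [Nat.log_mul_base one_lt_two (hpos x hx).ne']
          exact Nat.lt_succ_self _
      _ ≤ Nat.log 2 (f y) := Nat.log_mono_right (by omega)
  calc #S ≤ #(range (Nat.log 2 M + 1)) := by
        refine card_le_card_of_injOn (fun x => Nat.log 2 (f x))
          (fun x hx => mem_range.2 (Nat.lt_succ_of_le (Nat.log_mono_right (hM x hx))))
          fun x hx y hy hxy => by_contra fun hne => ?_
        rcases hhalf x hx y hy hne with h | h
        · exact (hlog x hx y h).ne hxy
        · exact (hlog y hy x h).ne hxy.symm
    _ = Nat.log 2 M + 1 := card_range _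

section EntryEdges

variable {V ι : Type*} [Fintype V] [Fintype ι] {par : V → Option V} {P : ι → V × V}
  {j : ι} {t v x y : V}

/-- The edges at which `P j` enters a heavy line. -/
noncomputable def entryEdges (par : V → Option V) (P : ι → V × V) (j : ι) : Finset V :=
  {x | x ∈ dpEdges par (P j) ∧ ∀ y ∈ dpEdges par (P j), ¬ HeavyStep par P y x}

namespace ParAcyclic

variable (hacyc : ParAcyclic par)
include hacyc

theorem exists_mem_entryEdges_onLine (hv : OnLine par P t v) (hvj : v ∈ dpEdges par (P j)) :
    ∃ x ∈ entryEdges par P j, OnLine par P t x := by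
  -- the highest edge of `P j` on the line
  obtain ⟨x, hx, hmin⟩ := exists_min_image
    ({x | OnLine par P t x ∧ x ∈ dpEdges par (P j)} : Finset V) (depth par)
    ⟨v, mem_filter.2 ⟨mem_univ _, hv, hvj⟩⟩
  obtain ⟨hxt, hxj⟩ := (mem_filter.1 hx).2
  refine ⟨x, mem_filter.2 ⟨mem_univ _, hxj, fun y hyj hyx => ?_⟩, hxt⟩
  have htx : t ≠ x := by
    rintro rfl
    exact hxt.1.2 y hyx
  have hyt : OnLine par P t y :=
    hacyc.onLine_of_anc hxt (hxt.anc.anc_parent htx hyx.2.1) (.of_parent hyx.2.1)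
  have hdepth : depth par y < depth par x :=
    hacyc.depth_lt (.of_parent hyx.2.1) (hacyc.ne_parent hyx.2.1).symm
  exact absurd (hmin y (mem_filter.2 ⟨mem_univ _, hyt, hyj⟩)) (not_le.2 hdepth)

/-- The lower entry edge `y` is a light child of an edge of `P j` below `x`. -/
theorem two_mul_card_pathsBelow_le_of_mem_entryEdges (hx : x ∈ entryEdges par P j)
    (hy : y ∈ entryEdges par P j) (hxy : Anc par x y) (hne : x ≠ y) :
    2 * #(pathsBelow par P y) ≤ #(pathsBelow par P x) := by
  obtain ⟨hxj, -⟩ := (mem_filter.1 hx).2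
  obtain ⟨hyj, hy_entry⟩ := (mem_filter.1 hy).2
  obtain ⟨u, hu⟩ := Option.ne_none_iff_exists'.1 (hyj.1.mem_forestEdges (Ne.symm hyj.2.1))
  have hxu : Anc par x u := hxy.anc_parent hne hu
  have huj : u ∈ dpEdges par (P j) := hacyc.mem_dpEdges_of_anc_of_anc hxj hyj hxu (.of_parent hu)
  have hlight : y ≠ heavyChild par P u :=
    fun h => hy_entry u huj ⟨huj.1.mem_forestEdges (Ne.symm huj.2.1), hu, h⟩
  exact (hacyc.two_mul_card_pathsBelow_le hu hlight).trans (card_le_card (pathsBelow_anti hxu))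

theorem card_entryEdges_le (j : ι) :
    #(entryEdges par P j) ≤ Nat.log 2 (Fintype.card ι) + 1 := by
  refine card_le_log_of_two_mul_le _ (fun x => #(pathsBelow par P x)) _
    (fun x hx => card_pos.2 ⟨j, mem_pathsBelow_of_mem_dpEdges (mem_filter.1 hx).2.1⟩)
    (fun x _ => card_le_univ _) fun x hx y hy hne => ?_
  rcases (mem_filter.1 hx).2.1.2.2.total (mem_filter.1 hy).2.1.2.2 with hxy | hyx
  · exact Or.inr (hacyc.two_mul_card_pathsBelow_le_of_mem_entryEdges hx hy hxy hne)
  · exact Or.inl (hacyc.two_mul_card_pathsBelow_le_of_mem_entryEdges hy hx hyx (Ne.symm hne))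

end ParAcyclic

end EntryEdges

section WindowFamily

variable {V ι : Type*} [Fintype V] [Fintype ι] {par : V → Option V} {P : ι → V × V}
  {t x : V}

/-- The top of the heavy line through `x` (junk value `x` if `x` is not an edge). -/
noncomputable def lineTop (par : V → Option V) (P : ι → V × V) (x : V) : V :=
  if h : ∃ t, OnLine par P t x then h.choose else x

theorem OnLine.lineTop_eq (h : OnLine par P t x) : lineTop par P x = t := by
  have hex : ∃ t, OnLine par P t x := ⟨t, h⟩
  rw [lineTop, dif_pos hex]
  exact hex.choose_spec.unique h

/-- Each `P j` meets at most `1 + log₂ k` lines, and at most two windows on each. -/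
theorem ParAcyclic.exists_window_family (hacyc : ParAcyclic par)
    (hcover : ∀ v ∈ forestEdges par, ∃ i, v ∈ dpEdges par (P i)) :
    ∃ W : Finset (V × V), (∀ Q ∈ W, (∃ i, IsSubpath par (P i) Q) ∧ Q.1 ≠ Q.2) ∧
      forestEdges par ⊆ ⋃ Q ∈ W, dpEdges par Q ∧
      ∀ j, #{Q ∈ W | (dpEdges par Q ∩ dpEdges par (P j)).Nonempty} ≤
        2 * (Nat.log 2 (Fintype.card ι) + 1) := by
  choose W hWpath hWcov hWtwo using hacyc.exists_line_windows (P := P) hcover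
  refine ⟨univ.biUnion W, fun Q hQ => ?_, fun v hv => ?_, fun j => ?_⟩
  · obtain ⟨t, -, hQt⟩ := mem_biUnion.1 hQ
    exact ⟨(hWpath t Q hQt).1, (hWpath t Q hQt).2.1⟩
  · obtain ⟨t, ht⟩ := hacyc.exists_onLine (P := P) hv
    obtain ⟨Q, hQ, hvQ⟩ := hWcov t v ht
    exact Set.mem_biUnion (mem_biUnion.2 ⟨t, mem_univ _, hQ⟩) hvQ
  · calc #{Q ∈ univ.biUnion W | (dpEdges par Q ∩ dpEdges par (P j)).Nonempty}
        ≤ #((entryEdges par P j).biUnion fun x =>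
            {Q ∈ W (lineTop par P x) | (dpEdges par Q ∩ dpEdges par (P j)).Nonempty}) := by
          refine card_le_card fun Q hQ => ?_
          obtain ⟨hQ, v, hvQ, hvj⟩ := mem_filter.1 hQ
          obtain ⟨t, -, hQt⟩ := mem_biUnion.1 hQ
          obtain ⟨x, hx, hxt⟩ :=
            hacyc.exists_mem_entryEdges_onLine ((hWpath t Q hQt).2.2 v hvQ) hvj
          exact mem_biUnion.2 ⟨x, hx, mem_filter.2 ⟨hxt.lineTop_eq ▸ hQt, v, hvQ, hvj⟩⟩
      _ ≤ ∑ x ∈ entryEdges par P j, 2 :=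
          card_biUnion_le.trans (sum_le_sum fun x _ => hWtwo _ j)
      _ ≤ 2 * (Nat.log 2 (Fintype.card ι) + 1) := by
          rw [sum_const, smul_eq_mul, mul_comm]
          exact Nat.mul_le_mul_left 2 (hacyc.card_entryEdges_le j)

end WindowFamily

/-- If every window were dense, counting window–path incidences twice would bound the number of
covered points by `c · |ι| · m`. -/
theorem exists_sparse_of_cover {α β ι : Type*} [Finite α] [Fintype ι] {W : Finset β}
    {E : β → Set α} {F : ι → Set α} {U : Set α} (hU : U ⊆ ⋃ w ∈ W, E w) {m : ℕ}
    (hm : ∀ j, #{w ∈ W | (E w ∩ F j).Nonempty} ≤ m) {c : ℝ} (hc : 0 < c)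
    (hsize : c * Fintype.card ι * m < U.ncard) :
    ∃ w ∈ W, ({j | (E w ∩ F j).Nonempty}.ncard : ℝ) ≤ (E w).ncard / c := by
  by_contra! hdense
  have hincidences : ∑ w ∈ W, {j | (E w ∩ F j).Nonempty}.ncard ≤ Fintype.card ι * m := by
    calc ∑ w ∈ W, {j | (E w ∩ F j).Nonempty}.ncard
        = ∑ w ∈ W, #(univ.bipartiteAbove (fun w j => (E w ∩ F j).Nonempty) w) := by
          refine sum_congr rfl fun w _ => ?_
          rw [bipartiteAbove, ← Set.ncard_coe_finset, coe_filter]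
          simp
      _ = ∑ j, #{w ∈ W | (E w ∩ F j).Nonempty} :=
          sum_card_bipartiteAbove_eq_sum_card_bipartiteBelow _
      _ ≤ ∑ _j : ι, m := sum_le_sum fun j _ => hm j
      _ = Fintype.card ι * m := by rw [sum_const, card_univ, smul_eq_mul]
  have hcover : U.ncard ≤ ∑ w ∈ W, (E w).ncard :=
    (Set.ncard_le_ncard hU).trans (W.set_ncard_biUnion_le E)
  have : (U.ncard : ℝ) ≤ c * (Fintype.card ι * m) := by
    calc (U.ncard : ℝ) ≤ ∑ w ∈ W, ((E w).ncard : ℝ) := by exact_mod_cast hcover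
      _ ≤ ∑ w ∈ W, c * {j | (E w ∩ F j).Nonempty}.ncard :=
          sum_le_sum fun w hw => ((div_lt_iff₀' hc).1 (hdense w hw)).le
      _ ≤ c * (Fintype.card ι * m) := by
          rw [← mul_sum]
          exact mul_le_mul_of_nonneg_left (by exact_mod_cast hincidences) hc.le
  linarith

theorem sparse_path_in_forest_general {V : Type*} [Fintype V] (par : V → Option V)
    (hacyc : ParAcyclic par)
    (k : ℕ) (hk : 1 ≤ k) (P : Fin k → V × V)
    (hcover : ∀ v ∈ forestEdges par, ∃ i, v ∈ dpEdges par (P i))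
    (c : ℝ) (hc : 1 ≤ c)
    (hsize : 4 * c * k * (1 + Real.logb 2 k) ≤ ((forestEdges par).ncard : ℝ)) :
    ∃ i, ∃ Q : V × V, IsSubpath par (P i) Q ∧ Q.1 ≠ Q.2 ∧
      (({j | (dpEdges par Q ∩ dpEdges par (P j)).Nonempty}).ncard : ℝ)
        ≤ ((dpEdges par Q).ncard : ℝ) / c := by
  obtain ⟨W, hWpath, hWcov, hWcount⟩ := hacyc.exists_window_family hcover
  have hlog : (Nat.log 2 k : ℝ) ≤ Real.logb 2 k := Real.natLog_le_logb k 2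
  have hck : 1 ≤ c * k := one_le_mul_of_one_le_of_one_le hc (by exact_mod_cast hk)
  obtain ⟨Q, hQ, hsparse⟩ := exists_sparse_of_cover hWcov hWcount (c := c) (by linarith) (by
    rw [Fintype.card_fin]
    push_cast
    nlinarith [Real.logb_nonneg one_lt_two (show (1 : ℝ) ≤ k by exact_mod_cast hk)])
  obtain ⟨⟨i, hi⟩, hne⟩ := hWpath Q hQ
  exact ⟨i, Q, hi, hne, hsparse⟩

/-- if a rooted forest is edge-covered by `k` descending paths
`P₁,…,P_k` and has at least `4ck(1 + log₂ k)` edges (`c ≥ 1`), then some `Pᵢ`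
contains a `c`-sparse subpath `Q`: a subpath with at least one edge meeting at most
`|E(Q)|/c` of the paths on an edge. -/
theorem sparse_path_in_forest {V : Type*} [Fintype V] (par : V → Option V)
    (hacyc : ParAcyclic par)
    (k : ℕ) (hk : 1 ≤ k) (P : Fin k → V × V) (hP : ∀ i, IsDescPath par (P i))
    (hcover : ∀ v ∈ forestEdges par, ∃ i, v ∈ dpEdges par (P i))
    (c : ℝ) (hc : 1 ≤ c)
    (hsize : 4 * c * k * (1 + Real.logb 2 k) ≤ ((forestEdges par).ncard : ℝ)) :
    ∃ i, ∃ Q : V × V, IsSubpath par (P i) Q ∧ Q.1 ≠ Q.2 ∧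
      (({j | (dpEdges par Q ∩ dpEdges par (P j)).Nonempty}).ncard : ℝ)
        ≤ ((dpEdges par Q).ncard : ℝ) / c :=
  sparse_path_in_forest_general par hacyc k hk P hcover c hc hsize
end

section
/- Let k ≥ 2, c ≥ 1, p ≥ 2, and k₁,…,k_p ≥ 1 with Σᵢ kᵢ ≤ k and kᵢ ≤ k/2 for all i. Then 4ck + Σᵢ 4c·kᵢ·(1 + log₂ kᵢ) ≤ 4ck(1 + log₂ k). -/
/-! Since `kᵢ ≤ k/2`, each `1 + log₂ kᵢ = log₂ (2kᵢ)` is at most `log₂ k`, so the sum is at most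
`(Σ kᵢ) log₂ k ≤ k log₂ k`. -/

open Finset Real

lemma one_add_logb_two_le_logb_two {x y : ℝ} (hx : 0 < x) (hxy : 2 * x ≤ y) :
    1 + logb 2 x ≤ logb 2 y := by
  have hdouble : 1 + logb 2 x = logb 2 (2 * x) := by
    rw [logb_mul two_ne_zero hx.ne', logb_self_eq_one one_lt_two]
  rw [hdouble]
  exact logb_le_logb_of_le one_lt_two (by positivity) hxy

lemma sum_mul_one_add_logb_two_le {ι : Type*} (s : Finset ι) (x : ι → ℝ) {y : ℝ}
    (hy : 1 ≤ y) (hx : ∀ i ∈ s, 0 < x i) (hhalf : ∀ i ∈ s, 2 * x i ≤ y)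
    (hsum : ∑ i ∈ s, x i ≤ y) :
    ∑ i ∈ s, x i * (1 + logb 2 (x i)) ≤ y * logb 2 y :=
  calc ∑ i ∈ s, x i * (1 + logb 2 (x i))
      ≤ ∑ i ∈ s, x i * logb 2 y := sum_le_sum fun i hi ↦
        mul_le_mul_of_nonneg_left (one_add_logb_two_le_logb_two (hx i hi) (hhalf i hi))
          (hx i hi).le
    _ = (∑ i ∈ s, x i) * logb 2 y := (sum_mul s x _).symm
    _ ≤ y * logb 2 y :=
        mul_le_mul_of_nonneg_right hsum (logb_nonneg one_lt_two hy)

theorem inductive_estimate_general (k c : ℝ) (hk : 2 ≤ k) (hc : 1 ≤ c) (p : ℕ)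
    (ki : Fin p → ℝ) (hki : ∀ i, 1 ≤ ki i) (hsum : ∑ i, ki i ≤ k)
    (hhalf : ∀ i, ki i ≤ k / 2) :
    4 * c * k + ∑ i, 4 * c * ki i * (1 + Real.logb 2 (ki i)) ≤
      4 * c * k * (1 + Real.logb 2 k) := by
  have hbound := sum_mul_one_add_logb_two_le univ ki (by linarith)
    (fun i _ ↦ by linarith [hki i]) (fun i _ ↦ by linarith [hhalf i]) hsum
  have hfactor : ∑ i, 4 * c * ki i * (1 + logb 2 (ki i)) =
      4 * c * ∑ i, ki i * (1 + logb 2 (ki i)) := by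
    rw [mul_sum]; simp only [mul_assoc]
  rw [hfactor]
  nlinarith [mul_le_mul_of_nonneg_left hbound (by linarith : (0 : ℝ) ≤ 4 * c)]

/-- for `k ≥ 2`, `c ≥ 1`, `p ≥ 2` and reals `k₁,…,k_p ≥ 1` with
`Σ kᵢ ≤ k` and `kᵢ ≤ k/2`, we have
`4ck + Σ 4c·kᵢ·(1 + log₂ kᵢ) ≤ 4ck(1 + log₂ k)`. -/
theorem inductive_estimate (k c : ℝ) (hk : 2 ≤ k) (hc : 1 ≤ c) (p : ℕ) (hp : 2 ≤ p)
    (ki : Fin p → ℝ) (hki : ∀ i, 1 ≤ ki i) (hsum : ∑ i, ki i ≤ k)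
    (hhalf : ∀ i, ki i ≤ k / 2) :
    4 * c * k + ∑ i, 4 * c * ki i * (1 + Real.logb 2 (ki i)) ≤
      4 * c * k * (1 + Real.logb 2 k) :=
  inductive_estimate_general k c hk hc p ki hki hsum hhalf
end

section
/- Let G be a graph with connected component C = G₁ ⊕ G₂ (a complete join of two nonempty graphs), and suppose C is not all of G. If C contains an induced P4, then (without loss of generality with the P4 contained in G₁) the vertex set of G₁ is a module of G that is not a comodule and that contains an edge. -/
/-!
Vertices outside the component `C` see none of `C`, and vertices of `G₂` see all of `G₁`, so `G₁`
is a module. It is not a component of `G` because `G₂` is attached to it, and not a component of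
`Gᶜ` because in `Gᶜ` it is attached to every vertex outside `C`.
-/

namespace IsCC

variable {V : Type*} {G : SimpleGraph V} {M : Set V} {x y : V}

theorem mem_of_reachable (hM : IsCC G M) (hx : x ∈ M) (h : G.Reachable x y) : y ∈ M := by
  obtain ⟨z, rfl⟩ := hM
  exact hx.trans h

theorem not_adj_of_mem_of_notMem (hM : IsCC G M) (hx : x ∈ M) (hy : y ∉ M) : ¬ G.Adj x y :=
  fun h => hy (hM.mem_of_reachable hx h.reachable)

theorem compl_adj_of_mem_of_notMem (hM : IsCC G M) (hx : x ∈ M) (hy : y ∉ M) : Gᶜ.Adj x y :=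
  ⟨fun h => hy (h ▸ hx), hM.not_adj_of_mem_of_notMem hx hy⟩

theorem isModule_of_subset {X : Set V} (hM : IsCC G M) (hXM : X ⊆ M)
    (hadj : ∀ v ∈ M \ X, ∀ x ∈ X, G.Adj v x) : IsModule G X := by
  intro x hx y hy v hv
  by_cases hvM : v ∈ M
  · exact iff_of_true (hadj v ⟨hvM, hv⟩ x hx) (hadj v ⟨hvM, hv⟩ y hy)
  · have hout : ∀ u ∈ X, ¬ G.Adj v u := fun u hu h =>
      hM.not_adj_of_mem_of_notMem (hXM hu) hvM h.symm
    exact iff_of_false (hout x hx) (hout y hy)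

end IsCC

theorem not_isCC_of_adj {V : Type*} {G : SimpleGraph V} {M : Set V} {x y : V} (hx : x ∈ M)
    (hy : y ∉ M) (h : G.Adj x y) : ¬ IsCC G M :=
  fun hM => hM.not_adj_of_mem_of_notMem hx hy h

theorem join_component_gives_module_general {V : Type*} (G : SimpleGraph V)
    (C V1 V2 : Set V) (hC : IsCC G C) (hCne : C ≠ Set.univ)
    (hpart : V1 ∪ V2 = C) (hdisj : Disjoint V1 V2)
    (h2 : V2.Nonempty)
    (hjoin : ∀ x ∈ V1, ∀ y ∈ V2, G.Adj x y)
    (a b c d : V) (ha : a ∈ V1) (hb : b ∈ V1)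
    (hP4 : IsInducedP4 G a b c d) :
    IsModule G V1 ∧ ¬ IsComodule G V1 ∧ ∃ x ∈ V1, ∃ y ∈ V1, G.Adj x y := by
  have hV1C : V1 ⊆ C := hpart ▸ Set.subset_union_left
  have hmod : IsModule G V1 := hC.isModule_of_subset hV1C fun v hv x hx =>
    (hjoin x hx v ((hpart ▸ hv.1 : v ∈ V1 ∪ V2).resolve_left hv.2)).symm
  obtain ⟨y, hy⟩ := h2
  obtain ⟨w, hw⟩ := (Set.ne_univ_iff_exists_notMem C).1 hCne
  obtain ⟨-, -, -, -, -, -, hab, -⟩ := hP4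
  refine ⟨hmod, fun hco => ?_, a, ha, b, hb, hab⟩
  rcases hco.2 with hcc | hcc
  · exact not_isCC_of_adj ha (hdisj.notMem_of_mem_right hy) (hjoin a ha y hy) hcc
  · exact not_isCC_of_adj ha (fun hw1 => hw (hV1C hw1))
      (hC.compl_adj_of_mem_of_notMem (hV1C ha) hw) hcc

/-- if a connected component `C ≠ V` of `G` is a complete join
`G₁ ⊕ G₂` of two nonempty parts and contains an induced `P₄` (wlog inside `G₁`),
then the vertex set of `G₁` is a module of `G` which is not a comodule and which
contains an edge. -/
theorem join_component_gives_module {V : Type*} (G : SimpleGraph V)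
    (C V1 V2 : Set V) (hC : IsCC G C) (hCne : C ≠ Set.univ)
    (hpart : V1 ∪ V2 = C) (hdisj : Disjoint V1 V2)
    (h1 : V1.Nonempty) (h2 : V2.Nonempty)
    (hjoin : ∀ x ∈ V1, ∀ y ∈ V2, G.Adj x y)
    (a b c d : V) (ha : a ∈ V1) (hb : b ∈ V1) (hc : c ∈ V1) (hd : d ∈ V1)
    (hP4 : IsInducedP4 G a b c d) :
    IsModule G V1 ∧ ¬ IsComodule G V1 ∧ ∃ x ∈ V1, ∃ y ∈ V1, G.Adj x y :=
  join_component_gives_module_general G C V1 V2 hC hCne hpart hdisj h2 hjoin a b c d ha hb hP4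
end
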